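/- arXiv:1009.1067 — 3 statements merged into one kernel-verified Lean document; each statement's English description precedes it below -/
import Mathlib

section
/- Let z ∈ ℍ and s, s', w ∈ ℂ with Re(s) > 1, Re(s') > 1, Re(w) > 2−2·Re(s) and Re(w) > 2−2·Re(s'). Then the non-holomorphic double Eisenstein series ℰ(z,w;s,s') converges absolutely, uniformly for z, w, s, s' in compact sets satisfying these constraints. -/
noncomputable section

open Complex Filter MeasureTheory

abbrev SL2Z := Matrix.SpecialLinearGroup (Fin 2) ℤ
abbrev SL2R := Matrix.SpecialLinearGroup (Fin 2) ℝ

/-- `j(γ,z) = cz+d` for `γ ∈ SL(2,ℤ)`. -/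
def jZ (γ : SL2Z) (z : ℂ) : ℂ := ((γ 1 0 : ℤ) : ℂ) * z + ((γ 1 1 : ℤ) : ℂ)

/-- The Möbius action `γz = (az+b)/(cz+d)` for `γ ∈ SL(2,ℤ)`. -/
def actZ (γ : SL2Z) (z : ℂ) : ℂ := (((γ 0 0 : ℤ) : ℂ) * z + ((γ 0 1 : ℤ) : ℂ)) / jZ γ z

/-- `j(γ,z) = cz+d` for `γ ∈ SL(2,ℝ)`. -/
def jR (γ : SL2R) (z : ℂ) : ℂ := ((γ 1 0 : ℝ) : ℂ) * z + ((γ 1 1 : ℝ) : ℂ)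

/-- The Möbius action for `γ ∈ SL(2,ℝ)`. -/
def actR (γ : SL2R) (z : ℂ) : ℂ := (((γ 0 0 : ℝ) : ℂ) * z + ((γ 0 1 : ℝ) : ℂ)) / jR γ z

/-- Coprime pairs `(c,d)`, parametrizing the cosets `B\Γ` via the bottom row. -/
def CP : Type := {p : ℤ × ℤ // IsCoprime p.1 p.2}

/-- Coprime pairs with normalized sign, parametrizing `Γ∞\Γ` via the bottom row. -/
def CP1 : Type := {p : ℤ × ℤ // IsCoprime p.1 p.2 ∧ (0 < p.1 ∨ (p.1 = 0 ∧ 0 < p.2))}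

/-- `j(γ,z) = cz+d` in terms of the bottom row. -/
def jP (p : ℤ × ℤ) (z : ℂ) : ℂ := (p.1 : ℂ) * z + (p.2 : ℂ)

/-- `c_{γδ⁻¹} = c_γ d_δ − d_γ c_δ` in terms of the bottom rows of `γ, δ`. -/
def crossP (p q : ℤ × ℤ) : ℤ := p.1 * q.2 - p.2 * q.1

/-- `Im(γz) = Im z / |cz+d|²` in terms of the bottom row of `γ`. -/
def imP (p : ℤ × ℤ) (z : ℂ) : ℝ := z.im / Complex.normSq (jP p z)

/-- A representative Möbius action for a coset with bottom row the coprime pair `(c,d)`: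
choosing `a, b` with `ad−bc = 1`, return `(az+b)/(cz+d)`. -/
def mobiusP (p : ℤ × ℤ) (h : IsCoprime p.1 p.2) (z : ℂ) : ℂ :=
  ((h.choose_spec.choose : ℂ) * z - (h.choose : ℂ)) / jP p z

def mobiusCP (p : CP) (z : ℂ) : ℂ := mobiusP p.1 p.2 z
def mobiusCP1 (p : CP1) (z : ℂ) : ℂ := mobiusP p.1 p.2.1 z

/-- The term of the double Eisenstein series `E_{s,k-s}(z,w)`. -/
def dblEisTerm (k : ℤ) (s w : ℂ) (z : ℂ) (pq : CP × CP) : ℂ :=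
  if 0 < crossP pq.1.1 pq.2.1 then
    ((crossP pq.1.1 pq.2.1 : ℤ) : ℂ) ^ (w - 1) * (jP pq.1.1 z / jP pq.2.1 z) ^ (-s) *
      (jP pq.2.1 z) ^ (-k)
  else 0

/-- The double Eisenstein series `E_{s,k-s}(z,w)`. -/
def dblEis (k : ℤ) (s w : ℂ) (z : ℂ) : ℂ := ∑' pq : CP × CP, dblEisTerm k s w z pq

/-- The completing factor for `E*_{s,k-s}(z,w)`. -/
def eisFactor (k : ℤ) (s w : ℂ) : ℂ :=
  Complex.exp (s * Real.pi * I / 2) * Complex.Gamma s * Complex.Gamma ((k : ℂ) - s) *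
      Complex.Gamma ((k : ℂ) - w) * riemannZeta (1 - w + s) * riemannZeta (1 - w + (k : ℂ) - s) /
    ((2 : ℂ) ^ ((3 : ℂ) - w) * (Real.pi : ℂ) ^ ((k : ℂ) + 1 - w) * Complex.Gamma ((k : ℂ) - 1))

/-- The completed double Eisenstein series `E*_{s,k-s}(z,w)`. -/
def dblEisStar (k : ℤ) (s w : ℂ) (z : ℂ) : ℂ := eisFactor k s w * dblEis k s w z

/-- The weight-`k` Hecke operator `T_n`. -/
def hecke (k : ℤ) (n : ℕ) (f : ℂ → ℂ) (z : ℂ) : ℂ :=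
  (n : ℂ) ^ (k - 1) * ∑ p ∈ n.divisorsAntidiagonal,
    ((p.2 : ℕ) : ℂ) ^ (-k) * ∑ b ∈ Finset.range p.2, f (((p.1 : ℂ) * z + (b : ℂ)) / (p.2 : ℂ))

/-- The completed `L`-function `L*(f,s) = ∫_0^∞ f(iy) y^{s-1} dy`. -/
def Lstar (f : ℂ → ℂ) (s : ℂ) : ℂ := ∫ y in Set.Ioi (0 : ℝ), f ((y : ℂ) * I) * (y : ℂ) ^ (s - 1)

/-- The twisted completed `L`-function `L*(f,s;x) = ∫_0^∞ f(iy+x) y^{s-1} dy`. -/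
def LstarT (f : ℂ → ℂ) (s : ℂ) (x : ℚ) : ℂ :=
  ∫ y in Set.Ioi (0 : ℝ), f ((x : ℂ) + (y : ℂ) * I) * (y : ℂ) ^ (s - 1)

/-- The standard fundamental domain for `SL(2,ℤ)\ℍ`, as a subset of `ℝ²`. -/
def fundDom : Set (ℝ × ℝ) := {p | 0 < p.2 ∧ |p.1| ≤ 1 / 2 ∧ 1 ≤ p.1 ^ 2 + p.2 ^ 2}

/-- The Petersson inner product `⟨g,f⟩ = ∫_F g(z) conj(f(z)) y^k dx dy / y²`. -/
def petersson (k : ℤ) (g f : ℂ → ℂ) : ℂ :=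
  ∫ p in fundDom, g ((p.1 : ℂ) + (p.2 : ℂ) * I) * (starRingEnd ℂ) (f ((p.1 : ℂ) + (p.2 : ℂ) * I)) *
    ((p.2 : ℂ)) ^ (k - 2)

/-- `f` is a normalized Hecke eigenform of weight `k` for `SL(2,ℤ)`, with Fourier
coefficients `a`. -/
structure IsHeckeEigenform (k : ℤ) (f : ℂ → ℂ) (a : ℕ → ℂ) : Prop where
  holo : DifferentiableOn ℂ f {z : ℂ | 0 < z.im}
  transform : ∀ γ : SL2Z, ∀ z : ℂ, 0 < z.im → f (actZ γ z) = jZ γ z ^ k * f z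
  expansion : ∀ z : ℂ, 0 < z.im →
    HasSum (fun n : ℕ => a n * Complex.exp (2 * Real.pi * I * (n : ℂ) * z)) (f z)
  cusp : a 0 = 0
  normalized : a 1 = 1
  eigen : ∀ n : ℕ, 0 < n → ∃ lam : ℂ, ∀ z : ℂ, 0 < z.im → hecke k n f z = lam * f z

/-- The generalized Cohen kernel `C_k(z,s;x)`. -/
def cohen (k : ℤ) (s : ℂ) (x : ℚ) (z : ℂ) : ℂ :=
  (1 / 2) * ∑' γ : SL2Z, (actZ γ z + (x : ℂ)) ^ (-s) * (jZ γ z) ^ (-k)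

/-- The Poincaré series `P_k(z;m)` (over `Γ∞\Γ`). -/
def poincare (k : ℤ) (m : ℕ) (z : ℂ) : ℂ :=
  ∑' p : CP1, Complex.exp (2 * Real.pi * I * (m : ℂ) * mobiusCP1 p z) * (jP p.1 z) ^ (-k)

/-- The series `Q_k(z,l;m)`. -/
def Qser (k : ℤ) (l m : ℕ) (z : ℂ) : ℂ :=
  if l = 0 then poincare k m z
  else (1 / 2) * ∑' p : CP, Complex.exp (2 * Real.pi * I * (m : ℂ) * mobiusCP p z) *
    ((p.1.1 : ℂ)) ^ l * (jP p.1 z) ^ (-(k + (l : ℤ)))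

/-- The Rankin–Cohen bracket `[g₁,g₂]_n` of weights `k₁, k₂`. -/
def RC (k₁ k₂ n : ℕ) (g₁ g₂ : ℂ → ℂ) (z : ℂ) : ℂ :=
  ∑ r ∈ Finset.range (n + 1), (-1 : ℂ) ^ r * (Nat.choose (k₁ + n - 1) (n - r) : ℂ) *
    (Nat.choose (k₂ + n - 1) r : ℂ) * iteratedDeriv r g₁ z * iteratedDeriv (n - r) g₂ z

/-- The coefficient `A_{k₁,k₂}(l,u)_n`. -/
def Acoef (k₁ k₂ l u n : ℕ) : ℂ :=
  ((Nat.factorial (k₁ + n - 1) * Nat.factorial (k₂ + n - 1) : ℕ) : ℂ) /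
    ((Nat.factorial l * Nat.factorial u * Nat.factorial (n - l - u) *
      Nat.factorial (k₁ + l - 1) * Nat.factorial (k₂ + u - 1) : ℕ) : ℂ)

/-- The term of the double Poincaré series. -/
def dblPoinTerm (k₁ k₂ : ℤ) (w : ℂ) (m₁ m₂ : ℕ) (z : ℂ) (pq : CP × CP) : ℂ :=
  if 0 < crossP pq.1.1 pq.2.1 then
    ((crossP pq.1.1 pq.2.1 : ℤ) : ℂ) ^ (w - 1) *
      Complex.exp (2 * Real.pi * I * ((m₁ : ℂ) * mobiusCP pq.1 z + (m₂ : ℂ) * mobiusCP pq.2 z)) *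
      (jP pq.1.1 z) ^ (-k₁) * (jP pq.2.1 z) ^ (-k₂)
  else 0

/-- The double Poincaré series `P_{k₁,k₂}(z,w;m₁,m₂)`. -/
def dblPoin (k₁ k₂ : ℤ) (w : ℂ) (m₁ m₂ : ℕ) (z : ℂ) : ℂ :=
  ∑' pq : CP × CP, dblPoinTerm k₁ k₂ w m₁ m₂ z pq

/-- The double Eisenstein series `E_{k₁,k₂}(z,w)` with two integral weights. -/
def dblEis2 (k₁ k₂ : ℤ) (w : ℂ) (z : ℂ) : ℂ :=
  ∑' pq : CP × CP, if 0 < crossP pq.1.1 pq.2.1 then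
    ((crossP pq.1.1 pq.2.1 : ℤ) : ℂ) ^ (w - 1) * (jP pq.1.1 z) ^ (-k₁) * (jP pq.2.1 z) ^ (-k₂)
  else 0

/-- `f` transforms with weight `k` under `SL(2,ℤ)`. -/
def IsWeaklyModular (k : ℤ) (f : ℂ → ℂ) : Prop :=
  ∀ γ : SL2Z, ∀ z : ℂ, 0 < z.im → f (actZ γ z) = jZ γ z ^ k * f z

/-- `f` is a holomorphic modular form of weight `k` for `SL(2,ℤ)`. -/
def IsModularForm (k : ℤ) (f : ℂ → ℂ) : Prop :=
  DifferentiableOn ℂ f {z : ℂ | 0 < z.im} ∧ IsWeaklyModular k f ∧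
    ∃ C A : ℝ, ∀ z : ℂ, A ≤ z.im → ‖f z‖ ≤ C

/-- `f` is a holomorphic cusp form of weight `k` for `SL(2,ℤ)`. -/
def IsCuspForm (k : ℤ) (f : ℂ → ℂ) : Prop :=
  DifferentiableOn ℂ f {z : ℂ | 0 < z.im} ∧ IsWeaklyModular k f ∧
    Tendsto f (comap Complex.im atTop) (nhds 0)

/-- The term of the non-holomorphic kernel `K(z;s,s')`. -/
def KkerTerm (z s s' : ℂ) (γ : SL2Z) : ℂ :=
  (((actZ γ z).im : ℝ) : ℂ) ^ (s + s') / ((‖actZ γ z‖ : ℝ) : ℂ) ^ (2 * s)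

/-- The non-holomorphic kernel `K(z;s,s') = (1/2) Σ_{γ ∈ SL(2,ℤ)} Im(γz)^{s+s'}/|γz|^{2s}`. -/
def Kker (z s s' : ℂ) : ℂ := (1 / 2) * ∑' γ : SL2Z, KkerTerm z s s' γ

/-- The term of the non-holomorphic double Eisenstein series `ℰ(z,w;s,s')`. -/
def nhTerm (w s s' : ℂ) (z : ℂ) (pq : CP1 × CP1) : ℂ :=
  if crossP pq.1.1 pq.2.1 ≠ 0 then
    ((imP pq.1.1 z : ℝ) : ℂ) ^ s * ((imP pq.2.1 z : ℝ) : ℂ) ^ s' *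
      ((|crossP pq.1.1 pq.2.1| : ℤ) : ℂ) ^ (-w)
  else 0

/-- The non-holomorphic double Eisenstein series `ℰ(z,w;s,s')`. -/
def nhE (z : ℂ) (w s s' : ℂ) : ℂ := ∑' pq : CP1 × CP1, nhTerm w s s' z pq

/-- `g` is a cusp form of weight `k` with Fourier coefficients `b`. -/
structure IsCuspFormWithCoeffs (k : ℤ) (g : ℂ → ℂ) (b : ℕ → ℂ) : Prop where
  holo : DifferentiableOn ℂ g {z : ℂ | 0 < z.im}
  transform : ∀ γ : SL2Z, ∀ z : ℂ, 0 < z.im → g (actZ γ z) = jZ γ z ^ k * g z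
  expansion : ∀ z : ℂ, 0 < z.im →
    HasSum (fun n : ℕ => b n * Complex.exp (2 * Real.pi * I * (n : ℂ) * z)) (g z)
  czero : b 0 = 0

/-- The term of the quadruple-sum form of the double Eisenstein series:
`(ad−bc)^{w−1} ((az+b)/(cz+d))^{−s} (cz+d)^{−k}` for `ad−bc > 0`. -/
def quadTerm (k : ℤ) (s w : ℂ) (z : ℂ) (v : ℤ × ℤ × ℤ × ℤ) : ℂ :=
  if 0 < v.1 * v.2.2.2 - v.2.1 * v.2.2.1 then
    ((v.1 * v.2.2.2 - v.2.1 * v.2.2.1 : ℤ) : ℂ) ^ (w - 1) *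
      (((v.1 : ℂ) * z + (v.2.1 : ℂ)) / ((v.2.2.1 : ℂ) * z + (v.2.2.2 : ℂ))) ^ (-s) *
      ((v.2.2.1 : ℂ) * z + (v.2.2.2 : ℂ)) ^ (-k)
  else 0

/-- The twisted version: `(ad−bc)^{w−1} ((az+b)/(cz+d) + x)^{−s} (cz+d)^{−k}` for `ad−bc > 0`. -/
def quadTermT (k : ℤ) (s w : ℂ) (x : ℚ) (z : ℂ) (v : ℤ × ℤ × ℤ × ℤ) : ℂ :=
  if 0 < v.1 * v.2.2.2 - v.2.1 * v.2.2.1 then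
    ((v.1 * v.2.2.2 - v.2.1 * v.2.2.1 : ℤ) : ℂ) ^ (w - 1) *
      (((v.1 : ℂ) * z + (v.2.1 : ℂ)) / ((v.2.2.1 : ℂ) * z + (v.2.2.2 : ℂ)) + (x : ℂ)) ^ (-s) *
      ((v.2.2.1 : ℂ) * z + (v.2.2.2 : ℂ)) ^ (-k)
  else 0

/-!
Write `u = Im(γz)`, `v = Im(δz)` and `N = |c_{γδ⁻¹}|`. Since
`Im((cz+d)·conj(c'z+d')) = (cd'−dc')·Im z`, we have `N² u v ≤ 1`, so with `a = max(−Re w, 0)`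
each term is at most `u ^ (Re s − a/2) · v ^ (Re s' − a/2)`, and the hypotheses say exactly that
both exponents exceed `1`. From `|cz+d| ≥ r(z)·max(|c|,|d|)` one gets
`Im(γz)^t ≤ (Im z / r(z)²)^t · max(|c|,|d|)^(−2t)`, summable over coprime pairs for `t > 1`.
The prefactor is continuous in `(z,w,s,s')`, so near each admissible point the terms have one
summable majorant; the M-test then gives uniform convergence on neighbourhoods, hence on compact
sets.
-/

open UpperHalfPlane EisensteinSeries Real Topology

lemma continuous_r : Continuous (r : ℍ → ℝ) := by
  unfold r r1
  have : ∀ z : ℍ, z.re ^ 2 + z.im ^ 2 ≠ 0 := fun z => by have := z.im_pos; positivity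
  fun_prop (disch := exact this _)

lemma continuousAt_im_div_r_ofComplex_sq {z : ℂ} (hz : 0 < z.im) :
    ContinuousAt (fun z => z.im / r (ofComplex z) ^ 2) z := by
  have hr : ContinuousAt (fun z => r (ofComplex z)) z :=
    continuous_r.continuousAt.comp (ofComplex.continuousAt (by simpa [ofComplex] using hz))
  exact Complex.continuous_im.continuousAt.div (hr.pow 2) (pow_ne_zero _ (r_pos _).ne')

lemma finTwoArrowEquiv_symm_ne_zero {p : ℤ × ℤ} (hp : IsCoprime p.1 p.2) :
    (finTwoArrowEquiv ℤ).symm p ≠ 0 := by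
  intro h
  have h₁ : p.1 = 0 := by simpa using congrFun h 0
  have h₂ : p.2 = 0 := by simpa using congrFun h 1
  exact not_isCoprime_zero_zero (h₁ ▸ h₂ ▸ hp)

lemma one_le_norm_finTwoArrowEquiv_symm {p : ℤ × ℤ} (hp : IsCoprime p.1 p.2) :
    1 ≤ ‖(finTwoArrowEquiv ℤ).symm p‖ := by
  obtain ⟨i, hi⟩ := Function.ne_iff.mp (finTwoArrowEquiv_symm_ne_zero hp)
  calc (1 : ℝ) ≤ ‖(finTwoArrowEquiv ℤ).symm p i‖ := by
        rw [Int.norm_eq_abs]; exact_mod_cast Int.one_le_abs hi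
    _ ≤ _ := norm_le_pi_norm _ i

lemma r_mul_norm_le_norm_jP (z : ℍ) {p : ℤ × ℤ} (hp : IsCoprime p.1 p.2) :
    r z * ‖(finTwoArrowEquiv ℤ).symm p‖ ≤ ‖jP p z‖ :=
  r_mul_max_le z (finTwoArrowEquiv_symm_ne_zero hp)

lemma imP_pos (z : ℍ) {p : ℤ × ℤ} (hp : IsCoprime p.1 p.2) : 0 < imP p z := by
  have hpos : 0 < r z * ‖(finTwoArrowEquiv ℤ).symm p‖ :=
    mul_pos (r_pos z) (by linarith [one_le_norm_finTwoArrowEquiv_symm hp])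
  have hj : jP p z ≠ 0 := norm_pos_iff.mp (hpos.trans_le (r_mul_norm_le_norm_jP z hp))
  exact div_pos z.im_pos (Complex.normSq_pos.mpr hj)

lemma imP_le (z : ℍ) {p : ℤ × ℤ} (hp : IsCoprime p.1 p.2) :
    imP p z ≤ z.im / r z ^ 2 * (‖(finTwoArrowEquiv ℤ).symm p‖ ^ 2)⁻¹ := by
  have hv := one_le_norm_finTwoArrowEquiv_symm hp
  have := r_pos z
  calc imP p z = z.im / ‖jP p z‖ ^ 2 := by rw [imP, Complex.sq_norm]; rfl
    _ ≤ z.im / (r z * ‖(finTwoArrowEquiv ℤ).symm p‖) ^ 2 :=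
        div_le_div_of_nonneg_left z.im_pos.le (by positivity)
          (pow_le_pow_left₀ (by positivity) (r_mul_norm_le_norm_jP z hp) 2)
    _ = _ := by ring

lemma imP_rpow_le (z : ℍ) {p : ℤ × ℤ} (hp : IsCoprime p.1 p.2) {τ t : ℝ} (hτ : 0 ≤ τ)
    (hτt : τ ≤ t) :
    imP p z ^ t ≤ (z.im / r z ^ 2) ^ t * ‖(finTwoArrowEquiv ℤ).symm p‖ ^ (-(2 * τ)) := by
  have := r_pos z
  calc imP p z ^ t ≤ (z.im / r z ^ 2 * (‖(finTwoArrowEquiv ℤ).symm p‖ ^ 2)⁻¹) ^ t :=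
        rpow_le_rpow (imP_pos z hp).le (imP_le z hp) (by linarith)
    _ = (z.im / r z ^ 2) ^ t * ‖(finTwoArrowEquiv ℤ).symm p‖ ^ (-(2 * t)) := by
        rw [mul_rpow (by have := z.im_pos; positivity) (by positivity), inv_rpow (by positivity),
          ← rpow_natCast_mul (norm_nonneg _), ← rpow_neg (norm_nonneg _)]
        norm_num
    _ ≤ _ := by gcongr; exact one_le_norm_finTwoArrowEquiv_symm hp

lemma im_jP_mul_conj_jP (p q : ℤ × ℤ) (z : ℂ) :
    (jP p z * (starRingEnd ℂ) (jP q z)).im = crossP p q * z.im := by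
  simp only [jP, crossP, Complex.mul_im, Complex.conj_re, Complex.conj_im, Complex.add_re,
    Complex.add_im, Complex.mul_re, Complex.mul_im, Complex.intCast_re, Complex.intCast_im]
  push_cast
  ring

lemma imP_mul_imP_mul_crossP_sq_le_one (p q : ℤ × ℤ) (z : ℂ) :
    imP p z * imP q z * (crossP p q : ℝ) ^ 2 ≤ 1 := by
  have h := pow_le_pow_left₀ (abs_nonneg _)
    (Complex.abs_im_le_norm (jP p z * (starRingEnd ℂ) (jP q z))) 2
  rw [sq_abs, im_jP_mul_conj_jP, norm_mul, Complex.norm_conj, mul_pow, mul_pow, Complex.sq_norm,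
    Complex.sq_norm] at h
  calc imP p z * imP q z * (crossP p q : ℝ) ^ 2
      = (crossP p q : ℝ) ^ 2 * z.im ^ 2 / (Complex.normSq (jP p z) * Complex.normSq (jP q z)) := by
        simp only [imP]; ring
    _ ≤ 1 := div_le_one_of_le₀ h (mul_nonneg (Complex.normSq_nonneg _) (Complex.normSq_nonneg _))

def imExponent (σ ω : ℝ) : ℝ := σ - max (-ω) 0 / 2

lemma one_lt_imExponent {σ ω : ℝ} (hσ : 1 < σ) (hω : 2 - 2 * σ < ω) : 1 < imExponent σ ω := by
  rcases max_cases (-ω) 0 with ⟨h, -⟩ | ⟨h, -⟩ <;> rw [imExponent, h] <;> linarith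

lemma norm_nhTerm_le (z : ℍ) (w s s' : ℂ) (pq : CP1 × CP1) :
    ‖nhTerm w s s' z pq‖ ≤
      imP pq.1.1 z ^ imExponent s.re w.re * imP pq.2.1 z ^ imExponent s'.re w.re := by
  set u := imP pq.1.1 z
  set v := imP pq.2.1 z
  have hu : 0 < u := imP_pos z pq.1.2.1
  have hv : 0 < v := imP_pos z pq.2.2.1
  set a := max (-w.re) 0
  rw [nhTerm]
  split_ifs with hc
  · set N : ℝ := ((|crossP pq.1.1 pq.2.1| : ℤ) : ℝ)
    have hN : 1 ≤ N := by simp only [N]; exact_mod_cast Int.one_le_abs hc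
    have hNuv : N ^ 2 ≤ (u * v)⁻¹ := by
      have h := imP_mul_imP_mul_crossP_sq_le_one pq.1.1 pq.2.1 z
      rw [← one_div, le_div_iff₀ (by positivity)]
      simpa [N, sq_abs, mul_comm] using h
    have hNw : N ^ (-w.re) ≤ (u * v)⁻¹ ^ (a / 2) :=
      calc N ^ (-w.re) ≤ N ^ a := rpow_le_rpow_of_exponent_le hN (le_max_left _ _)
        _ = (N ^ 2) ^ (a / 2) := by rw [← rpow_natCast_mul (by positivity)]; ring_nf
        _ ≤ (u * v)⁻¹ ^ (a / 2) := rpow_le_rpow (by positivity) hNuv (by positivity)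
    have hcast : (((|crossP pq.1.1 pq.2.1| : ℤ) : ℂ)) = ((N : ℝ) : ℂ) :=
      (Complex.ofReal_intCast _).symm
    rw [norm_mul, norm_mul, Complex.norm_cpow_eq_rpow_re_of_pos hu,
      Complex.norm_cpow_eq_rpow_re_of_pos hv, hcast,
      Complex.norm_cpow_eq_rpow_re_of_pos (by positivity), Complex.neg_re]
    calc u ^ s.re * v ^ s'.re * N ^ (-w.re) ≤ u ^ s.re * v ^ s'.re * (u * v)⁻¹ ^ (a / 2) := by
          gcongr
      _ = _ := by
        rw [imExponent, imExponent, rpow_sub hu, rpow_sub hv, inv_rpow (by positivity),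
          mul_rpow hu.le hv.le]
        ring
  · rw [norm_zero]
    exact mul_nonneg (rpow_nonneg hu.le _) (rpow_nonneg hv.le _)

lemma summable_norm_finTwoArrowEquiv_symm_rpow {τ : ℝ} (hτ : 2 < τ) :
    Summable fun p : CP1 => ‖(finTwoArrowEquiv ℤ).symm p.1‖ ^ (-τ) :=
  (summable_one_div_norm_rpow hτ).comp_injective
    ((finTwoArrowEquiv ℤ).symm.injective.comp Subtype.val_injective)

lemma norm_nhTerm_le_of_le_imExponent (z : ℍ) (w s s' : ℂ) {τ : ℝ} (hτ : 0 ≤ τ)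
    (h₁ : τ ≤ imExponent s.re w.re) (h₂ : τ ≤ imExponent s'.re w.re) (pq : CP1 × CP1) :
    ‖nhTerm w s s' z pq‖ ≤
      (z.im / r z ^ 2) ^ imExponent s.re w.re * (z.im / r z ^ 2) ^ imExponent s'.re w.re *
        (‖(finTwoArrowEquiv ℤ).symm pq.1.1‖ ^ (-(2 * τ)) *
          ‖(finTwoArrowEquiv ℤ).symm pq.2.1‖ ^ (-(2 * τ))) := by
  refine (norm_nhTerm_le z w s s' pq).trans ?_
  rw [mul_mul_mul_comm]
  exact mul_le_mul (imP_rpow_le z pq.1.2.1 hτ h₁) (imP_rpow_le z pq.2.2.1 hτ h₂)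
    (rpow_nonneg (imP_pos z pq.2.2.1).le _) (by have := z.im_pos; positivity)

lemma exists_nhds_summable_bound_nhTerm {z w s s' : ℂ} (hz : 0 < z.im) (hs : 1 < s.re)
    (hs' : 1 < s'.re) (hw : 2 - 2 * s.re < w.re) (hw' : 2 - 2 * s'.re < w.re) :
    ∃ t ∈ 𝓝 (z, w, s, s'), ∃ u : CP1 × CP1 → ℝ, Summable u ∧
      ∀ pq, ∀ x ∈ t, ‖nhTerm x.2.1 x.2.2.1 x.2.2.2 x.1 pq‖ ≤ u pq := by
  set x₀ : ℂ × ℂ × ℂ × ℂ := (z, w, s, s')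
  let e₁ : ℂ × ℂ × ℂ × ℂ → ℝ := fun x => imExponent x.2.2.1.re x.2.1.re
  let e₂ : ℂ × ℂ × ℂ × ℂ → ℝ := fun x => imExponent x.2.2.2.re x.2.1.re
  let C : ℂ × ℂ × ℂ × ℂ → ℝ := fun x => x.1.im / r (ofComplex x.1) ^ 2
  let F : ℂ × ℂ × ℂ × ℂ → ℝ := fun x => C x ^ e₁ x * C x ^ e₂ x
  obtain ⟨τ, hτ, hτ₁, hτ₂⟩ : ∃ τ, 1 < τ ∧ τ < e₁ x₀ ∧ τ < e₂ x₀ := by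
    obtain ⟨τ, h, h'⟩ :=
      exists_between (lt_min (one_lt_imExponent hs hw) (one_lt_imExponent hs' hw'))
    exact ⟨τ, h, h'.trans_le (min_le_left _ _), h'.trans_le (min_le_right _ _)⟩
  have he₁ : Continuous e₁ := by simp only [e₁, imExponent]; fun_prop
  have he₂ : Continuous e₂ := by simp only [e₂, imExponent]; fun_prop
  have him : Continuous fun x : ℂ × ℂ × ℂ × ℂ => x.1.im := by fun_prop
  have hC₀ : 0 < C x₀ := div_pos hz (pow_pos (r_pos _) 2)
  have hC : ContinuousAt C x₀ :=
    ContinuousAt.comp (f := Prod.fst) (x := x₀) (continuousAt_im_div_r_ofComplex_sq hz)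
      continuousAt_fst
  have hF : ContinuousAt F x₀ :=
    (hC.rpow he₁.continuousAt (Or.inl hC₀.ne')).mul (hC.rpow he₂.continuousAt (Or.inl hC₀.ne'))
  refine ⟨{x | 0 < x.1.im ∧ τ < e₁ x ∧ τ < e₂ x ∧ F x < F x₀ + 1}, ?_,
    fun pq => (F x₀ + 1) * (‖(finTwoArrowEquiv ℤ).symm pq.1.1‖ ^ (-(2 * τ)) *
      ‖(finTwoArrowEquiv ℤ).symm pq.2.1‖ ^ (-(2 * τ))), ?_, ?_⟩
  · exact (continuousAt_const.eventually_lt him.continuousAt hz).and <|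
      (continuousAt_const.eventually_lt he₁.continuousAt hτ₁).and <|
      (continuousAt_const.eventually_lt he₂.continuousAt hτ₂).and <|
      hF.eventually_lt continuousAt_const (lt_add_one _)
  · have h := summable_norm_finTwoArrowEquiv_symm_rpow (by linarith : 2 < 2 * τ)
    exact (h.mul_of_nonneg h (fun _ => by positivity) (fun _ => by positivity)).mul_left _
  · rintro pq x ⟨hxz, h₁, h₂, hFx⟩
    have hCx : C x = (⟨x.1, hxz⟩ : ℍ).im / r ⟨x.1, hxz⟩ ^ 2 := by
      simp only [C, ofComplex_apply_of_im_pos hxz]; rfl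
    calc ‖nhTerm x.2.1 x.2.2.1 x.2.2.2 x.1 pq‖
        ≤ F x * (‖(finTwoArrowEquiv ℤ).symm pq.1.1‖ ^ (-(2 * τ)) *
            ‖(finTwoArrowEquiv ℤ).symm pq.2.1‖ ^ (-(2 * τ))) := by
          rw [show F x = C x ^ e₁ x * C x ^ e₂ x from rfl, hCx]
          exact norm_nhTerm_le_of_le_imExponent ⟨x.1, hxz⟩ x.2.1 x.2.2.1 x.2.2.2 (by linarith)
              h₁.le h₂.le pq
      _ ≤ _ := mul_le_mul_of_nonneg_right hFx.le (by positivity)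

theorem tendstoUniformlyOn_tsum_of_forall_exists_nhds {α β F : Type*} [TopologicalSpace β]
    [NormedAddCommGroup F] [CompleteSpace F] {f : α → β → F} {K : Set β} (hK : IsCompact K)
    (h : ∀ x ∈ K, ∃ t ∈ 𝓝[K] x, ∃ u : α → ℝ, Summable u ∧ ∀ n, ∀ y ∈ t, ‖f n y‖ ≤ u n) :
    TendstoUniformlyOn (fun s : Finset α => fun x => ∑ n ∈ s, f n x) (fun x => ∑' n, f n x)
      atTop K :=
  (tendstoLocallyUniformlyOn_iff_tendstoUniformlyOn_of_compact hK).mp <|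
    tendstoLocallyUniformlyOn_of_forall_exists_nhds fun x hx =>
      let ⟨t, ht, _, hu, hfu⟩ := h x hx
      ⟨t, ht, tendstoUniformlyOn_tsum hu hfu⟩

/-- absolute convergence of the non-holomorphic double Eisenstein series
`ℰ(z,w;s,s')` for `Re s, Re s' > 1`, `Re w > 2-2Re s`, `Re w > 2-2Re s'`, uniformly on
compact subsets of the parameter region. -/
theorem statement2 :
    (∀ z w s s' : ℂ, 0 < z.im → 1 < s.re → 1 < s'.re →
      2 - 2 * s.re < w.re → 2 - 2 * s'.re < w.re →
      Summable fun pq : CP1 × CP1 => ‖nhTerm w s s' z pq‖) ∧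
    (∀ K : Set (ℂ × ℂ × ℂ × ℂ),
      K ⊆ {x : ℂ × ℂ × ℂ × ℂ | 0 < x.1.im ∧ 1 < x.2.2.1.re ∧ 1 < x.2.2.2.re ∧
        2 - 2 * x.2.2.1.re < x.2.1.re ∧ 2 - 2 * x.2.2.2.re < x.2.1.re} →
      IsCompact K →
      TendstoUniformlyOn
        (fun (F : Finset (CP1 × CP1)) (x : ℂ × ℂ × ℂ × ℂ) =>
          ∑ pq ∈ F, nhTerm x.2.1 x.2.2.1 x.2.2.2 x.1 pq)
        (fun x => nhE x.1 x.2.1 x.2.2.1 x.2.2.2) atTop K) := by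
  refine ⟨fun z w s s' hz hs hs' hw hw' => ?_, fun K hK hKc => ?_⟩
  · obtain ⟨t, ht, u, hu, hbound⟩ := exists_nhds_summable_bound_nhTerm hz hs hs' hw hw'
    exact hu.of_nonneg_of_le (fun _ => norm_nonneg _) fun pq =>
      hbound pq (z, w, s, s') (mem_of_mem_nhds ht)
  · refine tendstoUniformlyOn_tsum_of_forall_exists_nhds hKc fun x hx => ?_
    obtain ⟨hz, hs, hs', hw, hw'⟩ := hK hx
    obtain ⟨t, ht, u, hu, hbound⟩ := exists_nhds_summable_bound_nhTerm hz hs hs' hw hw'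
    exact ⟨t, mem_nhdsWithin_of_mem_nhds ht, u, hu, hbound⟩
end
end

section
/- Let k ∈ 2ℤ and let s, w ∈ ℂ satisfy 2 < Re(s) < k−2, Re(w) < Re(s)−1 and Re(w) < k−1−Re(s). Then ζ(1−w+s)·ζ(1−w+k−s)·E_{s,k−s}(z,w) = Σ_{a,b,c,d ∈ ℤ, ad−bc > 0} (ad−bc)^{w−1} · ((az+b)/(cz+d))^{−s} · (cz+d)^{−k}, where the right-hand side converges absolutely; here (az+b)/(cz+d) ∈ ℍ since ad−bc > 0, so the principal-branch power is well defined. -/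
noncomputable section

open Complex Filter MeasureTheory

/-!
An integer matrix with rows `u, v` and `det > 0` factors uniquely as rows `m • p`, `n • q` with
`m, n ≥ 1` and `p, q` coprime, and then `det = m n c_{γδ⁻¹}`. Since `m, n` are positive reals,
the principal-branch powers split, and the summand becomes `m^{w-1-s} n^{w-1+s-k}` times the
`(p, q)`-term of `E_{s,k-s}(z,w)`: the quadruple sum is the product of two Dirichlet series
for `ζ` with the double Eisenstein series. The latter converges absolutely because
`|cz+d| ≥ r(z) ‖(c,d)‖` and `c_{γδ⁻¹} ≤ 2 ‖p‖ ‖q‖` bound its terms by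
`‖p‖^{t - Re s} ‖q‖^{t + Re s - k}` with `t = max (Re w - 1) 0`; in `ℂ` summability is
absolute, so all the rearrangements are justified.
-/

namespace Complex

lemma ofReal_mul_cpow {x : ℝ} (hx : 0 < x) (ρ : ℂ) (c : ℂ) :
    ((x : ℂ) * ρ) ^ c = (x : ℂ) ^ c * ρ ^ c := by
  rcases eq_or_ne ρ 0 with rfl | hρ
  · rcases eq_or_ne c 0 with rfl | hc
    · simp
    · simp [zero_cpow hc]
  have hx' : (x : ℂ) ≠ 0 := ofReal_ne_zero.mpr hx.ne'
  rw [cpow_def_of_ne_zero (mul_ne_zero hx' hρ), log_ofReal_mul hx hρ, ofReal_log hx.le, add_mul,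
    exp_add, ← cpow_def_of_ne_zero hx', ← cpow_def_of_ne_zero hρ]

lemma norm_cpow_le_mul_exp (ρ c : ℂ) : ‖ρ ^ c‖ ≤ ‖ρ‖ ^ c.re * Real.exp (Real.pi * |c.im|) := by
  refine (norm_cpow_le ρ c).trans ?_
  rw [div_eq_mul_inv, ← Real.exp_neg]
  gcongr
  calc -(ρ.arg * c.im) ≤ |ρ.arg| * |c.im| := by rw [← abs_mul]; exact neg_le_abs _
    _ ≤ Real.pi * |c.im| := by gcongr; exact abs_arg_le_pi ρ

lemma hasSum_pnat_cpow_neg_riemannZeta {c : ℂ} (hc : 1 < c.re) :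
    HasSum (fun m : ℕ+ => ((m : ℕ) : ℂ) ^ (-c)) (riemannZeta c) := by
  have hzero : ∀ n ∉ Set.range ((↑) : ℕ+ → ℕ), LSeries.term 1 c n = 0 := fun n hn => by
    obtain rfl : n = 0 := by_contra fun h => hn ⟨⟨n, Nat.pos_of_ne_zero h⟩, rfl⟩
    exact LSeries.term_zero 1 c
  refine ((PNat.coe_injective.hasSum_iff hzero).mpr (LSeriesHasSum_one hc)).congr_fun fun m => ?_
  simp [cpow_neg]

end Complex

lemma HasSum.mul_of_finiteDimensional {ι κ R : Type*} [NormedRing R] [NormedSpace ℝ R]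
    [FiniteDimensional ℝ R] {f : ι → R} {g : κ → R} {a b : R} (hf : HasSum f a) (hg : HasSum g b) :
    HasSum (fun x : ι × κ => f x.1 * g x.2) (a * b) :=
  haveI := FiniteDimensional.complete ℝ R
  hf.mul hg (summable_mul_of_summable_norm (summable_norm_iff.mpr hf.summable)
    (summable_norm_iff.mpr hg.summable))

lemma summable_norm_rpow_neg_intPair {ρ : ℝ} (hρ : 2 < ρ) :
    Summable fun p : ℤ × ℤ => ‖p‖ ^ (-ρ) := by
  refine ((EisensteinSeries.summable_one_div_norm_rpow hρ).comp_injective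
    (finTwoArrowEquiv ℤ).symm.injective).congr fun p => ?_
  simp [EisensteinSeries.norm_eq_max_natAbs, Prod.norm_def, Int.norm_eq_abs]

lemma CP.ne_zero (p : CP) : p.1 ≠ 0 :=
  fun h => not_isCoprime_zero_zero (h ▸ p.2)

lemma r_mul_norm_le_norm_jP_s3 (z : UpperHalfPlane) {p : ℤ × ℤ} (hp : p ≠ 0) :
    EisensteinSeries.r z * ‖p‖ ≤ ‖jP p z‖ := by
  have hp' : ![p.1, p.2] ≠ 0 := fun h => hp (Prod.ext (congrFun h 0) (congrFun h 1))
  simpa [EisensteinSeries.norm_eq_max_natAbs, Prod.norm_def, Int.norm_eq_abs, jP] using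
    EisensteinSeries.r_mul_max_le z hp'

lemma norm_crossP_le (p q : ℤ × ℤ) : ‖crossP p q‖ ≤ 2 * (‖p‖ * ‖q‖) := by
  calc ‖crossP p q‖ ≤ ‖p.1‖ * ‖q.2‖ + ‖p.2‖ * ‖q.1‖ :=
        (norm_sub_le _ _).trans (add_le_add (norm_mul_le _ _) (norm_mul_le _ _))
    _ ≤ ‖p‖ * ‖q‖ + ‖p‖ * ‖q‖ := by
        gcongr <;> first | exact norm_fst_le _ | exact norm_snd_le _
    _ = 2 * (‖p‖ * ‖q‖) := by ring

section DoubleEisensteinBound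

variable (k : ℤ) (s w : ℂ) (z : UpperHalfPlane)

lemma norm_dblEisTerm_le {t : ℝ} (ht₀ : 0 ≤ t) (ht : w.re - 1 ≤ t) (hs : 0 < s.re)
    (hks : s.re < k) (pq : CP × CP) :
    ‖dblEisTerm k s w z pq‖ ≤ 2 ^ t * EisensteinSeries.r z ^ (-(k : ℝ)) *
      Real.exp (Real.pi * |s.im|) * (‖pq.1.1‖ ^ (t - s.re) * ‖pq.2.1‖ ^ (t + s.re - k)) := by
  obtain ⟨p, q⟩ := pq
  set r := EisensteinSeries.r z
  set P := ‖p.1‖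
  set Q := ‖q.1‖
  have hr : 0 < r := EisensteinSeries.r_pos z
  have hP : 0 < P := norm_pos_iff.mpr p.ne_zero
  have hQ : 0 < Q := norm_pos_iff.mpr q.ne_zero
  have hjp : r * P ≤ ‖jP p.1 z‖ := r_mul_norm_le_norm_jP_s3 z p.ne_zero
  have hjq : r * Q ≤ ‖jP q.1 z‖ := r_mul_norm_le_norm_jP_s3 z q.ne_zero
  have hjp₀ : 0 < ‖jP p.1 z‖ := lt_of_lt_of_le (by positivity) hjp
  have hjq₀ : 0 < ‖jP q.1 z‖ := lt_of_lt_of_le (by positivity) hjq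
  unfold dblEisTerm
  split_ifs with hD
  swap
  · rw [norm_zero]; positivity
  set D := crossP p.1 q.1
  have hD₁ : (1 : ℝ) ≤ D := by exact_mod_cast hD
  have hD₂ : (D : ℝ) ≤ 2 * (P * Q) :=
    calc (D : ℝ) = ‖D‖ := by rw [Int.norm_eq_abs, abs_of_pos (by exact_mod_cast hD)]
      _ ≤ 2 * (P * Q) := norm_crossP_le p.1 q.1
  have hdet : ‖((D : ℤ) : ℂ) ^ (w - 1)‖ ≤ 2 ^ t * (P ^ t * Q ^ t) := by
    rw [← Complex.ofReal_intCast, Complex.norm_cpow_eq_rpow_re_of_pos (by linarith)]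
    calc (D : ℝ) ^ (w - 1).re ≤ (D : ℝ) ^ t :=
          Real.rpow_le_rpow_of_exponent_le hD₁ (by simpa using ht)
      _ ≤ (2 * (P * Q)) ^ t := by gcongr
      _ = 2 ^ t * (P ^ t * Q ^ t) := by rw [Real.mul_rpow, Real.mul_rpow] <;> positivity
  have hratio : ‖(jP p.1 z / jP q.1 z) ^ (-s)‖ ≤
      ‖jP p.1 z‖ ^ (-s.re) * ‖jP q.1 z‖ ^ s.re * Real.exp (Real.pi * |s.im|) := by
    refine (Complex.norm_cpow_le_mul_exp _ _).trans_eq ?_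
    rw [norm_div, Real.div_rpow hjp₀.le hjq₀.le, Complex.neg_re, Complex.neg_im, abs_neg,
      Real.rpow_neg hjq₀.le, div_inv_eq_mul]
  have hjpPow : ‖jP p.1 z‖ ^ (-s.re) ≤ r ^ (-s.re) * P ^ (-s.re) := by
    rw [← Real.mul_rpow hr.le hP.le]
    exact Real.rpow_le_rpow_of_nonpos (by positivity) hjp (by linarith)
  have hjqPow : ‖jP q.1 z‖ ^ s.re * ‖jP q.1 z ^ (-k)‖ ≤ r ^ (s.re - k) * Q ^ (s.re - k) := by
    rw [norm_zpow, ← Real.rpow_intCast, ← Real.rpow_add hjq₀, Int.cast_neg, ← sub_eq_add_neg,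
      ← Real.mul_rpow hr.le hQ.le]
    exact Real.rpow_le_rpow_of_nonpos (by positivity) hjq (by linarith)
  calc ‖((D : ℤ) : ℂ) ^ (w - 1) * (jP p.1 z / jP q.1 z) ^ (-s) * jP q.1 z ^ (-k)‖
      ≤ 2 ^ t * (P ^ t * Q ^ t) *
          (‖jP p.1 z‖ ^ (-s.re) * ‖jP q.1 z‖ ^ s.re * Real.exp (Real.pi * |s.im|)) *
          ‖jP q.1 z ^ (-k)‖ := by
        rw [norm_mul, norm_mul]; gcongr
    _ = 2 ^ t * (P ^ t * Q ^ t) * ‖jP p.1 z‖ ^ (-s.re) *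
          (‖jP q.1 z‖ ^ s.re * ‖jP q.1 z ^ (-k)‖) * Real.exp (Real.pi * |s.im|) := by ring
    _ ≤ 2 ^ t * (P ^ t * Q ^ t) * (r ^ (-s.re) * P ^ (-s.re)) *
          (r ^ (s.re - k) * Q ^ (s.re - k)) * Real.exp (Real.pi * |s.im|) := by gcongr
    _ = 2 ^ t * r ^ (-(k : ℝ)) * Real.exp (Real.pi * |s.im|) *
          (P ^ (t - s.re) * Q ^ (t + s.re - k)) := by
        rw [sub_eq_add_neg t, Real.rpow_add hP, add_sub_assoc, Real.rpow_add hQ,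
          show -(k : ℝ) = -s.re + (s.re - k) by ring, Real.rpow_add hr]
        ring

lemma summable_dblEisTerm (hs₁ : 2 < s.re) (hs₂ : s.re < k - 2) (hw₁ : w.re < s.re - 1)
    (hw₂ : w.re < k - 1 - s.re) : Summable (dblEisTerm k s w z) := by
  obtain ⟨t, ht₀, ht, hpt, hqt⟩ : ∃ t : ℝ, 0 ≤ t ∧ w.re - 1 ≤ t ∧ 2 < s.re - t ∧ 2 < k - s.re - t :=
    ⟨max (w.re - 1) 0, le_max_right _ _, le_max_left _ _, by grind, by grind⟩
  have hrow (ρ : ℝ) (hρ : 2 < ρ) : Summable fun p : CP => ‖p.1‖ ^ (-ρ) :=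
    (summable_norm_rpow_neg_intPair hρ).comp_injective Subtype.val_injective
  have hp := hrow (s.re - t) hpt
  have hq := hrow (k - s.re - t) hqt
  refine Summable.of_norm_bounded (((hp.mul_of_nonneg hq (fun _ => by positivity)
    fun _ => by positivity).mul_left (2 ^ t * EisensteinSeries.r z ^ (-(k : ℝ)) *
      Real.exp (Real.pi * |s.im|))).congr fun pq => ?_)
    (norm_dblEisTerm_le k s w z ht₀ ht (by linarith) (by linarith))
  ring_nf

def smulCP (m : ℕ+) (p : CP) : ℤ × ℤ := (m : ℤ) • p.1

lemma gcd_smulCP (m : ℕ+) (p : CP) : Int.gcd (smulCP m p).1 (smulCP m p).2 = m := by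
  simp [smulCP, Int.gcd_mul_left, Int.isCoprime_iff_gcd_eq_one.mp p.2]

lemma smulCP_injective2 : Function.Injective2 smulCP := by
  intro m m' p p' h
  have hm : m = m' := PNat.coe_injective (by rw [← gcd_smulCP m p, ← gcd_smulCP m' p', h])
  subst hm
  exact ⟨rfl, Subtype.ext (smul_right_injective _ (by simp) h)⟩

lemma exists_smulCP_eq {v : ℤ × ℤ} (hv : v ≠ 0) : ∃ m p, smulCP m p = v := by
  have hg : 0 < Int.gcd v.1 v.2 := Int.gcd_pos_iff.mpr (by contrapose! hv; exact Prod.ext hv.1 hv.2)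
  refine ⟨⟨_, hg⟩, ⟨(v.1 / Int.gcd v.1 v.2, v.2 / Int.gcd v.1 v.2),
    Int.isCoprime_iff_gcd_eq_one.mpr (Int.gcd_div_gcd_div_gcd hg)⟩, Prod.ext ?_ ?_⟩
  · exact Int.mul_ediv_cancel' (Int.gcd_dvd_left _ _)
  · exact Int.mul_ediv_cancel' (Int.gcd_dvd_right _ _)

def scaledRows (x : (ℕ+ × ℕ+) × (CP × CP)) : ℤ × ℤ × ℤ × ℤ :=
  Equiv.prodAssoc ℤ ℤ (ℤ × ℤ) (smulCP x.1.1 x.2.1, smulCP x.1.2 x.2.2)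

lemma scaledRows_injective : Function.Injective scaledRows := by
  rintro ⟨⟨m, n⟩, ⟨p, q⟩⟩ ⟨⟨m', n'⟩, ⟨p', q'⟩⟩ h
  obtain ⟨h₁, h₂⟩ := Prod.mk.inj ((Equiv.prodAssoc ℤ ℤ (ℤ × ℤ)).injective h)
  obtain ⟨rfl, rfl⟩ := smulCP_injective2 h₁
  obtain ⟨rfl, rfl⟩ := smulCP_injective2 h₂
  rfl

lemma quadTerm_eq_zero_of_notMem_range_scaledRows (k : ℤ) (s w z : ℂ) {v : ℤ × ℤ × ℤ × ℤ}
    (hv : v ∉ Set.range scaledRows) : quadTerm k s w z v = 0 := by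
  obtain ⟨a, b, c, d⟩ := v
  refine if_neg fun hdet => hv ?_
  obtain ⟨m, p, hp⟩ := exists_smulCP_eq (v := (a, b)) (by rintro ⟨⟩; simp at hdet)
  obtain ⟨n, q, hq⟩ := exists_smulCP_eq (v := (c, d)) (by rintro ⟨⟩; simp at hdet)
  exact ⟨((m, n), (p, q)), by simp [scaledRows, hp, hq]⟩

lemma quadTerm_scaledRows (k : ℤ) (s w z : ℂ) (m n : ℕ+) (p q : CP) :
    quadTerm k s w z (scaledRows ((m, n), (p, q))) =
      ((m : ℕ) : ℂ) ^ (w - 1 - s) * ((n : ℕ) : ℂ) ^ (w - 1 + s - k) *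
        dblEisTerm k s w z (p, q) := by
  have hm : (0 : ℝ) < (m : ℕ) := by exact_mod_cast m.pos
  have hn : (0 : ℝ) < (n : ℕ) := by exact_mod_cast n.pos
  have hdet : (m * p.1.1) * (n * q.1.2) - (m * p.1.2) * (n * q.1.1) =
      ((m : ℤ) * n) * crossP p.1 q.1 := by
    simp only [crossP]; ring
  have hrow (l : ℕ+) (r : CP) : (((l : ℤ) * r.1.1 : ℤ) : ℂ) * z + (((l : ℤ) * r.1.2 : ℤ) : ℂ) =
      ((l : ℕ) : ℂ) * jP r.1 z := by
    simp only [jP]; push_cast; ring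
  simp only [quadTerm, dblEisTerm, scaledRows, smulCP, Equiv.prodAssoc_apply, Prod.smul_fst,
    Prod.smul_snd, smul_eq_mul, hdet, hrow]
  by_cases hD : 0 < crossP p.1 q.1
  swap
  · rw [if_neg ((mul_pos_iff_of_pos_left (by positivity)).not.mpr hD), if_neg hD, mul_zero]
  rw [if_pos (mul_pos (by positivity) hD), if_pos hD]
  have hdetPow : (((m * n * crossP p.1 q.1 : ℤ)) : ℂ) ^ (w - 1) =
      ((m : ℕ) : ℂ) ^ (w - 1) * ((n : ℕ) : ℂ) ^ (w - 1) * (crossP p.1 q.1 : ℂ) ^ (w - 1) := by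
    push_cast
    rw [mul_assoc, ← Complex.ofReal_natCast, Complex.ofReal_mul_cpow hm,
      ← Complex.ofReal_natCast, Complex.ofReal_mul_cpow hn, mul_assoc]
  have hratioPow : (((m : ℕ) : ℂ) * jP p.1 z / (((n : ℕ) : ℂ) * jP q.1 z)) ^ (-s) =
      ((m : ℕ) : ℂ) ^ (-s) * ((n : ℕ) : ℂ) ^ s * (jP p.1 z / jP q.1 z) ^ (-s) := by
    rw [mul_div_mul_comm, div_eq_mul_inv ((m : ℕ) : ℂ), mul_assoc, ← Complex.ofReal_natCast,
      Complex.ofReal_mul_cpow hm, ← Complex.ofReal_natCast, ← Complex.ofReal_inv,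
      Complex.ofReal_mul_cpow (inv_pos.mpr hn), Complex.ofReal_inv,
      Complex.inv_cpow_ofReal_nonneg hn.le, ← Complex.cpow_neg, neg_neg]
    ring
  have hm' : ((m : ℕ) : ℂ) ≠ 0 := by exact_mod_cast m.ne_zero
  have hn' : ((n : ℕ) : ℂ) ≠ 0 := by exact_mod_cast n.ne_zero
  rw [hdetPow, hratioPow, mul_zpow, sub_eq_add_neg (w - 1), Complex.cpow_add _ _ hm',
    sub_eq_add_neg _ (k : ℂ), Complex.cpow_add _ _ hn', Complex.cpow_add _ _ hn', ← Int.cast_neg,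
    Complex.cpow_intCast]
  ring

theorem statement3_general (k : ℤ) (s w z : ℂ) (hz : 0 < z.im)
    (hs1 : 2 < s.re) (hs2 : s.re < (k : ℝ) - 2)
    (hw1 : w.re < s.re - 1) (hw2 : w.re < (k : ℝ) - 1 - s.re) :
    (Summable fun v : ℤ × ℤ × ℤ × ℤ => ‖quadTerm k s w z v‖) ∧
    HasSum (quadTerm k s w z)
      (riemannZeta (1 - w + s) * riemannZeta (1 - w + (k : ℂ) - s) * dblEis k s w z) := by
  have hζ₁ := Complex.hasSum_pnat_cpow_neg_riemannZeta (c := 1 - w + s) (by simp; linarith)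
  have hζ₂ := Complex.hasSum_pnat_cpow_neg_riemannZeta (c := 1 - w + k - s) (by simp; linarith)
  have hE : HasSum (dblEisTerm k s w z) (dblEis k s w z) :=
    (summable_dblEisTerm k s w ⟨z, hz⟩ hs1 hs2 hw1 hw2).hasSum
  have hquad : HasSum (quadTerm k s w z ∘ scaledRows)
      (riemannZeta (1 - w + s) * riemannZeta (1 - w + k - s) * dblEis k s w z) := by
    refine ((hζ₁.mul_of_finiteDimensional hζ₂).mul_of_finiteDimensional hE).congr_fun ?_
    rintro ⟨⟨m, n⟩, p, q⟩
    rw [Function.comp_apply, quadTerm_scaledRows]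
    ring_nf
  have hsum := (scaledRows_injective.hasSum_iff
    fun _ hv => quadTerm_eq_zero_of_notMem_range_scaledRows k s w z hv).mp hquad
  exact ⟨summable_norm_iff.mpr hsum.summable, hsum⟩

/-- the quadruple-sum expression
`ζ(1-w+s) ζ(1-w+k-s) E_{s,k-s}(z,w) = Σ_{ad-bc>0} (ad-bc)^{w-1} ((az+b)/(cz+d))^{-s} (cz+d)^{-k}`,
the right-hand side converging absolutely. -/
theorem statement3 (k : ℤ) (hke : Even k) (s w z : ℂ) (hz : 0 < z.im)
    (hs1 : 2 < s.re) (hs2 : s.re < (k : ℝ) - 2)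
    (hw1 : w.re < s.re - 1) (hw2 : w.re < (k : ℝ) - 1 - s.re) :
    (Summable fun v : ℤ × ℤ × ℤ × ℤ => ‖quadTerm k s w z v‖) ∧
    HasSum (quadTerm k s w z)
      (riemannZeta (1 - w + s) * riemannZeta (1 - w + (k : ℂ) - s) * dblEis k s w z) :=
  statement3_general k s w z hz hs1 hs2 hw1 hw2
end DoubleEisensteinBound
end
end

section
/- Let k ∈ 2ℤ and let s, w ∈ ℂ satisfy 2 < Re(s) < k−2 and Re(w) < min(Re(s)−1, k−1−Re(s)). Then E_{s,k−s}(z,w) = e^{−iπs} · E_{k−s,s}(z,w) for all z ∈ ℍ; equivalently, for the completed series, E*_{k−s,s}(z,w) = (−1)^{k/2} · E*_{s,k−s}(z,w). -/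
noncomputable section

open Complex Filter MeasureTheory

/-! Swapping `γ` and `δ` in `E_{s,k-s}` (up to the sign that keeps `c_{γδ⁻¹} > 0`) replaces the
ratio `u = j(γ,z)/j(δ,z)`, which lies in `ℍ` because `Im u = c_{γδ⁻¹} Im z / |j(δ,z)|²`, by
`-u⁻¹`. On `ℍ` the principal branch satisfies `log(-u⁻¹) = πi - log u`, so `u^{-s}` and
`(-u⁻¹)^{s}` differ by exactly `e^{-πis}`; the evenness of `k` absorbs the remaining signs.
Everything is an identity term by term, and the reindexing is a bijection of the index set. -/

open scoped Real

namespace Complex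

lemma log_neg_inv_of_im_pos {u : ℂ} (hu : 0 < u.im) : log (-u⁻¹) = π * I - log u := by
  have hu0 : u ≠ 0 := fun h => by simp [h] at hu
  have harg : arg u ≠ π := fun h => (arg_eq_pi_iff.mp h).2.not_gt hu
  have hinv_im : (u⁻¹).im < 0 := by
    rw [inv_im]
    exact div_neg_of_neg_of_pos (neg_neg_of_pos hu) (normSq_pos.mpr hu0)
  have harg_neg_inv : arg (-u⁻¹) = -arg u + π := by
    rw [arg_neg_eq_arg_add_pi_of_im_neg hinv_im, arg_inv, if_neg harg]
  apply Complex.ext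
  · simp [log_re, Real.log_inv]
  · simp only [log_im, sub_im, harg_neg_inv, mul_im, ofReal_re, I_im, ofReal_im, I_re]
    ring

lemma cpow_neg_eq_exp_mul_neg_inv_cpow {u : ℂ} (hu : 0 < u.im) (s : ℂ) :
    u ^ (-s) = exp (-π * I * s) * (-u⁻¹) ^ s := by
  have hu0 : u ≠ 0 := fun h => by simp [h] at hu
  rw [cpow_def_of_ne_zero hu0, cpow_def_of_ne_zero (by simpa using hu0),
    log_neg_inv_of_im_pos hu, ← exp_add]
  ring_nf

lemma div_cpow_neg_mul_zpow_neg_eq {a b : ℂ} (hb : b ≠ 0) (hab : 0 < (a / b).im) {k : ℤ}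
    (hk : Even k) (s : ℂ) :
    (a / b) ^ (-s) * b ^ (-k) = exp (-π * I * s) * ((b / -a) ^ (-((k : ℂ) - s)) * (-a) ^ (-k)) := by
  set u := a / b with hu_def
  have hu0 : u ≠ 0 := fun h => by simp [h] at hab
  have ha : a = u * b := by rw [hu_def, div_mul_cancel₀ a hb]
  have hba : b / -a = -u⁻¹ := by rw [hu_def, inv_div, div_neg]
  have hsplit : (-u⁻¹) ^ (-((k : ℂ) - s)) = (-u⁻¹) ^ s * u ^ k := by
    rw [show -((k : ℂ) - s) = s + ((-k : ℤ) : ℂ) by push_cast; ring,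
      cpow_add _ _ (by simpa using hu0), cpow_intCast, hk.neg.neg_zpow, inv_zpow, zpow_neg, inv_inv]
  rw [hba, hsplit, hk.neg.neg_zpow, cpow_neg_eq_exp_mul_neg_inv_cpow hab, ha, mul_zpow,
    zpow_neg u]
  field_simp

end Complex

lemma jP_ne_zero {p : ℤ × ℤ} (hp : IsCoprime p.1 p.2) {z : ℂ} (hz : 0 < z.im) : jP p z ≠ 0 := by
  intro h
  have hc : p.1 = 0 := by
    have him := congrArg Complex.im h
    simp only [jP, add_im, mul_im, intCast_re, intCast_im, zero_mul, add_zero, zero_im,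
      mul_eq_zero, Int.cast_eq_zero] at him
    exact him.resolve_right hz.ne'
  have hd : p.2 = 0 := by simpa [jP, hc] using h
  rw [hc, hd] at hp
  exact not_isCoprime_zero_zero hp

lemma im_jP_div_jP (p q : ℤ × ℤ) (z : ℂ) :
    (jP p z / jP q z).im = crossP p q * z.im / normSq (jP q z) := by
  simp only [div_im, jP, crossP, add_im, mul_im, add_re, mul_re, intCast_re, intCast_im, normSq]
  push_cast
  ring

lemma im_jP_div_jP_pos {p q : ℤ × ℤ} (hq : IsCoprime q.1 q.2) {z : ℂ} (hz : 0 < z.im)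
    (hpq : 0 < crossP p q) : 0 < (jP p z / jP q z).im := by
  rw [im_jP_div_jP]
  exact div_pos (mul_pos (by exact_mod_cast hpq) hz) (normSq_pos.mpr (jP_ne_zero hq hz))

namespace CP

instance : Neg CP := ⟨fun p => ⟨-p.1, p.2.neg_left.neg_right⟩⟩

@[simp] lemma val_neg (p : CP) : (-p).1 = -p.1 := rfl

lemma neg_neg (p : CP) : - -p = p := Subtype.ext (_root_.neg_neg p.1)

def swapNeg : CP × CP ≃ CP × CP where
  toFun pq := (pq.2, -pq.1)
  invFun pq := (-pq.2, pq.1)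
  left_inv pq := by simp [neg_neg]
  right_inv pq := by simp [neg_neg]

end CP

lemma crossP_neg_right (p q : ℤ × ℤ) : crossP q (-p) = crossP p q := by
  simp only [crossP, Prod.fst_neg, Prod.snd_neg]
  ring

lemma jP_neg (p : ℤ × ℤ) (z : ℂ) : jP (-p) z = -jP p z := by
  simp only [jP, Prod.fst_neg, Prod.snd_neg, Int.cast_neg]
  ring

lemma dblEisTerm_eq_exp_mul_dblEisTerm_swapNeg {k : ℤ} (hk : Even k) (s w : ℂ) {z : ℂ}
    (hz : 0 < z.im) (pq : CP × CP) :
    dblEisTerm k s w z pq = exp (-π * I * s) * dblEisTerm k (k - s) w z (CP.swapNeg pq) := by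
  obtain ⟨p, q⟩ := pq
  simp only [dblEisTerm, CP.swapNeg, Equiv.coe_fn_mk, CP.val_neg, crossP_neg_right, jP_neg]
  split_ifs with hpq
  · rw [mul_assoc, Complex.div_cpow_neg_mul_zpow_neg_eq (jP_ne_zero q.2 hz)
      (im_jP_div_jP_pos q.2 hz hpq) hk]
    ring
  · rw [mul_zero]

lemma dblEis_eq_exp_mul_dblEis_sub {k : ℤ} (hk : Even k) (s w : ℂ) {z : ℂ} (hz : 0 < z.im) :
    dblEis k s w z = exp (-π * I * s) * dblEis k (k - s) w z := by
  simp only [dblEis, tsum_congr (dblEisTerm_eq_exp_mul_dblEisTerm_swapNeg hk s w hz),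
    tsum_mul_left, CP.swapNeg.tsum_eq]

lemma eisFactor_sub (k : ℤ) (s w : ℂ) :
    eisFactor k (k - s) w = exp ((k - 2 * s) * π * I / 2) * eisFactor k s w := by
  have hexp : exp ((k - s) * π * I / 2) = exp ((k - 2 * s) * π * I / 2) * exp (s * π * I / 2) := by
    rw [← exp_add]
    ring_nf
  simp only [eisFactor, sub_sub_cancel, hexp,
    show (1 : ℂ) - w + (k - s) = 1 - w + k - s by ring,
    show (1 : ℂ) - w + k - (k - s) = 1 - w + s by ring]
  ring

lemma exp_mul_exp_eq_neg_one_zpow {k : ℤ} (hk : Even k) (s : ℂ) :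
    exp ((k - 2 * s) * π * I / 2) * exp (π * I * s) = (-1 : ℂ) ^ (k / 2) := by
  obtain ⟨m, rfl⟩ := hk
  rw [← exp_add, show (m + m) / 2 = m by omega, ← exp_pi_mul_I, ← exp_int_mul]
  push_cast
  ring_nf

theorem statement5_general (k : ℤ) (hke : Even k) (s w : ℂ) :
    ∀ z : ℂ, 0 < z.im →
      dblEis k s w z = Complex.exp (-(Real.pi : ℂ) * I * s) * dblEis k ((k : ℂ) - s) w z ∧
      dblEisStar k ((k : ℂ) - s) w z = (-1 : ℂ) ^ (k / 2) * dblEisStar k s w z := by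
  intro z hz
  have hE := dblEis_eq_exp_mul_dblEis_sub hke s w hz
  have hE' : dblEis k (k - s) w z = exp (π * I * s) * dblEis k s w z := by
    rw [hE, ← mul_assoc, ← exp_add, show π * I * s + -π * I * s = 0 by ring, exp_zero, one_mul]
  refine ⟨hE, ?_⟩
  rw [dblEisStar, dblEisStar, eisFactor_sub, hE', ← exp_mul_exp_eq_neg_one_zpow hke s]
  ring

/-- the functional equation `E_{s,k-s}(z,w) = e^{-iπs} E_{k-s,s}(z,w)`;
equivalently `E*_{k-s,s}(z,w) = (-1)^{k/2} E*_{s,k-s}(z,w)`. -/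
theorem statement5 (k : ℤ) (hke : Even k) (s w : ℂ)
    (hs1 : 2 < s.re) (hs2 : s.re < (k : ℝ) - 2)
    (hw : w.re < min (s.re - 1) ((k : ℝ) - 1 - s.re)) :
    ∀ z : ℂ, 0 < z.im →
      dblEis k s w z = Complex.exp (-(Real.pi : ℂ) * I * s) * dblEis k ((k : ℂ) - s) w z ∧
      dblEisStar k ((k : ℂ) - s) w z = (-1 : ℂ) ^ (k / 2) * dblEisStar k s w z :=
  statement5_general k hke s w
end
end
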